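/- Let Δ ≥ 2 be an integer, s ≥ 0 and α ∈ [0,1]. With g_{k,s}(x) = ∑_{i=0}^{⌊s⌋} C(k,i) x^i (1−x)^{k−i}, define h(0) = α, h(t+1) = 1 − (1−α) g_{Δ−1,s}(h(t)), and h̃(t+1) = 1 − (1−α) g_{Δ,s}(h(t)) for t ≥ 0. Then h̃(t) converges as t → ∞ to h̃ = 1 − (1−α) g_{Δ,s}(h*), where h* is the smallest fixed point in [0,1] of x ↦ 1 − (1−α) g_{Δ−1,s}(x). -/

import Mathlib

/-!
The sequence `h` is the orbit of `α` under `F x = 1 - (1 - α) g_{Δ-1,s}(x)`. Since the binomial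
distribution function `g_{k,s}` is decreasing in the success probability (its derivative is
`-k` times a Bernstein polynomial), `F` is increasing on `[0,1]`. As `α ≤ F α` and `α ≤ h*`, the
orbit increases and stays below the fixed point `h*`, so it converges to a fixed point, which by
minimality is `h*`. Continuity of `g_{Δ,s}` then gives `h̃(t + 1) → 1 - (1 - α) g_{Δ,s}(h*)`.
-/

/-- `binCdf k s x = P(Bin(k,x) ≤ s) = ∑_{i=0}^{⌊s⌋} C(k,i) x^i (1-x)^{k-i}`,
the function `g_{k,s}(x)` of the paper. -/
noncomputable def binCdf (k : ℕ) (s : ℝ) (x : ℝ) : ℝ :=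
  ∑ i ∈ Finset.range (⌊s⌋₊ + 1), (k.choose i : ℝ) * x ^ i * (1 - x) ^ (k - i)

open Filter Topology Finset Polynomial Set Function

section Recurrence

variable {α : Type*} [Preorder α] {F : α → α} {a p : α} {u : ℕ → α}

theorem mem_Icc_of_recurrence (hF : MonotoneOn F (Icc a p)) (ha : a ≤ F a) (hp : F p = p)
    (hap : a ≤ p) (hu0 : u 0 = a) (hu : ∀ t, u (t + 1) = F (u t)) (t : ℕ) : u t ∈ Icc a p := by
  induction t with
  | zero => rw [hu0]; exact ⟨le_rfl, hap⟩
  | succ t ih =>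
    rw [hu]
    exact ⟨ha.trans (hF ⟨le_rfl, hap⟩ ih ih.1), hp ▸ hF ih ⟨hap, le_rfl⟩ ih.2⟩

theorem monotone_of_recurrence (hF : MonotoneOn F (Icc a p)) (ha : a ≤ F a) (hp : F p = p)
    (hap : a ≤ p) (hu0 : u 0 = a) (hu : ∀ t, u (t + 1) = F (u t)) : Monotone u := by
  have hmem := mem_Icc_of_recurrence hF ha hp hap hu0 hu
  refine monotone_nat_of_le_succ fun t => ?_
  induction t with
  | zero => rw [hu, hu0]; exact ha
  | succ t ih => rw [hu, hu (t + 1)]; exact hF (hmem t) (hmem (t + 1)) ih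

end Recurrence

theorem exists_isFixedPt_tendsto_of_recurrence {α : Type*} [ConditionallyCompleteLinearOrder α]
    [TopologicalSpace α] [OrderTopology α] {F : α → α} {a p : α} {u : ℕ → α}
    (hF : MonotoneOn F (Icc a p)) (hFc : ContinuousOn F (Icc a p)) (ha : a ≤ F a)
    (hp : F p = p) (hap : a ≤ p) (hu0 : u 0 = a) (hu : ∀ t, u (t + 1) = F (u t)) :
    ∃ L ∈ Icc a p, IsFixedPt F L ∧ Tendsto u atTop (𝓝 L) := by
  have hmem := mem_Icc_of_recurrence hF ha hp hap hu0 hu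
  have hlim : Tendsto u atTop (𝓝 (⨆ t, u t)) :=
    tendsto_atTop_ciSup (monotone_of_recurrence hF ha hp hap hu0 hu)
      ⟨p, forall_mem_range.2 fun t => (hmem t).2⟩
  have hL : (⨆ t, u t) ∈ Icc a p := isClosed_Icc.mem_of_tendsto hlim (Eventually.of_forall hmem)
  refine ⟨_, hL, tendsto_nhds_unique ?_ ((tendsto_add_atTop_iff_nat 1).2 hlim), hlim⟩
  simp only [hu]
  exact ((hFc _ hL).tendsto.comp (tendsto_nhdsWithin_iff.2 ⟨hlim, Eventually.of_forall hmem⟩))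

theorem bernsteinPolynomial.derivative_sum_range (R : Type*) [CommRing R] (n m : ℕ) :
    derivative (∑ i ∈ range (m + 1), bernsteinPolynomial R n i) =
      -n * bernsteinPolynomial R (n - 1) m := by
  induction m with
  | zero => simp [bernsteinPolynomial.derivative_zero]
  | succ m ih =>
    rw [sum_range_succ, derivative_add, ih, bernsteinPolynomial.derivative_succ]
    ring

theorem bernsteinPolynomial.eval_nonneg (n ν : ℕ) {x : ℝ} (hx : x ∈ Icc (0 : ℝ) 1) :
    0 ≤ (bernsteinPolynomial ℝ n ν).eval x := by
  simp only [bernsteinPolynomial, eval_mul, eval_pow, eval_sub, eval_one, eval_X, eval_natCast]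
  exact mul_nonneg (mul_nonneg (Nat.cast_nonneg _) (pow_nonneg hx.1 _))
    (pow_nonneg (sub_nonneg.2 hx.2) _)

theorem binCdf_eq_eval (k : ℕ) (s : ℝ) :
    binCdf k s = fun x => (∑ i ∈ range (⌊s⌋₊ + 1), bernsteinPolynomial ℝ k i).eval x := by
  ext x
  simp [binCdf, bernsteinPolynomial, eval_finsetSum]

theorem continuous_binCdf (k : ℕ) (s : ℝ) : Continuous (binCdf k s) := by
  rw [binCdf_eq_eval]
  exact Polynomial.continuous _

theorem binCdf_le_one (k : ℕ) (s : ℝ) {x : ℝ} (hx : x ∈ Icc (0 : ℝ) 1) : binCdf k s x ≤ 1 := by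
  let b : ℕ → ℝ := fun i => (bernsteinPolynomial ℝ k i).eval x
  calc binCdf k s x = ∑ i ∈ range (⌊s⌋₊ + 1), b i := by
        simp only [binCdf_eq_eval, eval_finsetSum, b]
    _ ≤ ∑ i ∈ range (max (⌊s⌋₊ + 1) (k + 1)), b i :=
      sum_le_sum_of_subset_of_nonneg (range_mono (le_max_left _ _))
        fun i _ _ => bernsteinPolynomial.eval_nonneg k i hx
    _ = ∑ i ∈ range (k + 1), b i := by
      refine (sum_subset (range_mono (le_max_right _ _)) fun i _ hi => ?_).symm
      simp only [b, bernsteinPolynomial.eq_zero_of_lt ℝ (by simpa using hi : k < i), eval_zero]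
    _ = 1 := by rw [← eval_finsetSum, bernsteinPolynomial.sum, eval_one]

theorem binCdf_antitoneOn (k : ℕ) (s : ℝ) : AntitoneOn (binCdf k s) (Icc 0 1) := by
  refine antitoneOn_of_hasDerivWithinAt_nonpos (f' := fun x =>
      (derivative (∑ i ∈ range (⌊s⌋₊ + 1), bernsteinPolynomial ℝ k i)).eval x) (convex_Icc 0 1)
    (continuous_binCdf k s).continuousOn (fun x _ => ?_) fun x hx => ?_
  · rw [binCdf_eq_eval]
    exact (Polynomial.hasDerivAt _ x).hasDerivWithinAt
  · rw [interior_Icc] at hx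
    rw [bernsteinPolynomial.derivative_sum_range, eval_mul, eval_neg, eval_natCast, neg_mul,
      neg_nonpos]
    exact mul_nonneg k.cast_nonneg (bernsteinPolynomial.eval_nonneg _ _ (Ioo_subset_Icc_self hx))

theorem root_prob_tendsto_general (Δ : ℕ) (s : ℝ)
    (α : ℝ) (hα : α ∈ Set.Icc (0 : ℝ) 1)
    (h htilde : ℕ → ℝ) (h0 : h 0 = α)
    (hrec : ∀ t : ℕ, h (t + 1) = 1 - (1 - α) * binCdf (Δ - 1) s (h t))
    (htrec : ∀ t : ℕ, htilde (t + 1) = 1 - (1 - α) * binCdf Δ s (h t))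
    (hstar : ℝ) (hstarmem : hstar ∈ Set.Icc (0 : ℝ) 1)
    (hstarfix : 1 - (1 - α) * binCdf (Δ - 1) s hstar = hstar)
    (hstarmin : ∀ x ∈ Set.Icc (0 : ℝ) 1, 1 - (1 - α) * binCdf (Δ - 1) s x = x → hstar ≤ x) :
    Filter.Tendsto htilde Filter.atTop (nhds (1 - (1 - α) * binCdf Δ s hstar)) := by
  set F : ℝ → ℝ := fun x => 1 - (1 - α) * binCdf (Δ - 1) s x
  have h1α : 0 ≤ 1 - α := sub_nonneg.2 hα.2
  have hF : MonotoneOn F (Icc 0 1) := fun x hx y hy hxy =>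
    sub_le_sub_left (mul_le_mul_of_nonneg_left (binCdf_antitoneOn _ s hx hy hxy) h1α) 1
  have hle_F : ∀ x ∈ Icc (0 : ℝ) 1, α ≤ F x := fun x hx => by
    nlinarith [binCdf_le_one (Δ - 1) s hx]
  have hαstar : α ≤ hstar := hstarfix ▸ hle_F hstar hstarmem
  have hsub : Icc α hstar ⊆ Icc 0 1 := Icc_subset_Icc hα.1 hstarmem.2
  have hFc : Continuous F := continuous_const.sub (continuous_const.mul (continuous_binCdf _ s))
  obtain ⟨L, hL, hLfix, hlim⟩ := exists_isFixedPt_tendsto_of_recurrence (hF.mono hsub)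
    hFc.continuousOn (hle_F α hα) hstarfix hαstar h0 hrec
  obtain rfl : L = hstar := le_antisymm hL.2 (hstarmin L (hsub hL) hLfix)
  refine (tendsto_add_atTop_iff_nat 1).1 ?_
  simp_rw [htrec]
  exact ((continuous_const.sub (continuous_const.mul (continuous_binCdf Δ s))).tendsto L).comp hlim

/-- The probability `h̃(t+1) = 1 − (1−α) g_{Δ,s}(h(t))` that the root plays `B` at time
`t+1` converges to `h̃ = 1 − (1−α) g_{Δ,s}(h*)`, where `h*` is the smallest fixed point
of `x ↦ 1 − (1−α) g_{Δ−1,s}(x)` in `[0,1]`. -/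
theorem root_prob_tendsto (Δ : ℕ) (hΔ : 2 ≤ Δ) (s : ℝ) (hs : 0 ≤ s)
    (α : ℝ) (hα : α ∈ Set.Icc (0 : ℝ) 1)
    (h htilde : ℕ → ℝ) (h0 : h 0 = α)
    (hrec : ∀ t : ℕ, h (t + 1) = 1 - (1 - α) * binCdf (Δ - 1) s (h t))
    (htrec : ∀ t : ℕ, htilde (t + 1) = 1 - (1 - α) * binCdf Δ s (h t))
    (hstar : ℝ) (hstarmem : hstar ∈ Set.Icc (0 : ℝ) 1)
    (hstarfix : 1 - (1 - α) * binCdf (Δ - 1) s hstar = hstar)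
    (hstarmin : ∀ x ∈ Set.Icc (0 : ℝ) 1, 1 - (1 - α) * binCdf (Δ - 1) s x = x → hstar ≤ x) :
    Filter.Tendsto htilde Filter.atTop (nhds (1 - (1 - α) * binCdf Δ s hstar)) :=
  root_prob_tendsto_general Δ s α hα h htilde h0 hrec htrec hstar hstarmem hstarfix hstarmin
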